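/- Let p, q, P, Q be positive reals with P = ρQ for some ρ > 1, and set r = log(p/q) with 0 < r ≤ log ρ + log(log(ρ + e − 1)). Then |log(p/q)|·Q + |log(q/p)|·P ≥ |1 − p/q|·Q + |1 − q/p|·P; i.e., the 'reverse' derivative magnitude dominates the 'forward' derivative magnitude. -/

import Mathlib

/-!
Put `x = p / q > 1`. Since `P = ρ Q`, the difference of the two sides is `Q * g x` with
`g x = (1 + ρ) log x - (x - 1) - ρ (1 - x⁻¹)` (`reverseForwardGap`). As
`g' x = (x - 1)(ρ - x) / x²`, `g` increases from `g 1 = 0` up to `ρ` and decreases afterwards,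
so `g ≥ 0` on `[1, y]` once `g y ≥ 0`. The bound on `r` says `x ≤ ρ L(ρ)` with
`L(ρ) = log (ρ + e - 1)` (`logShift`), so everything reduces to `F(ρ) = g (ρ L(ρ)) ≥ 0` for
`ρ ≥ 1` (`endpointGap`).

The shift `e - 1` makes `F` vanish to third order at `ρ = 1`, so `F` is differentiated twice:
`F 1 = F' 1 = 0`, and `F''` is a rational function whose numerator is a polynomial in `e`, `ρ`,
`L(ρ)`. Writing `e = 5/2 + d`, `L = 1 + n` and `ρ = e n + b + 1`, where `b ≥ 0` is the
inequality `e L ≤ ρ + e - 1` (that is, `e log s ≤ s` for `s = ρ + e - 1`), turns it into a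
polynomial with nonnegative coefficients in `d, n, b ≥ 0`.
-/

open Real Set

lemma monotoneOn_of_hasDerivAt_nonneg {D : Set ℝ} (hD : Convex ℝ D) {f f' : ℝ → ℝ}
    (hf : ∀ x ∈ D, HasDerivAt f (f' x) x) (hf' : ∀ x ∈ interior D, 0 ≤ f' x) :
    MonotoneOn f D :=
  monotoneOn_of_hasDerivWithinAt_nonneg hD (fun x hx ↦ (hf x hx).continuousAt.continuousWithinAt)
    (fun x hx ↦ (hf x (interior_subset hx)).hasDerivWithinAt) hf'

lemma antitoneOn_of_hasDerivAt_nonpos {D : Set ℝ} (hD : Convex ℝ D) {f f' : ℝ → ℝ}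
    (hf : ∀ x ∈ D, HasDerivAt f (f' x) x) (hf' : ∀ x ∈ interior D, f' x ≤ 0) :
    AntitoneOn f D :=
  antitoneOn_of_hasDerivWithinAt_nonpos hD (fun x hx ↦ (hf x hx).continuousAt.continuousWithinAt)
    (fun x hx ↦ (hf x (interior_subset hx)).hasDerivWithinAt) hf'

lemma nonneg_of_hasDerivAt_nonneg {f f' : ℝ → ℝ} {a x : ℝ}
    (hf : ∀ t, a ≤ t → HasDerivAt f (f' t) t) (hf' : ∀ t, a ≤ t → 0 ≤ f' t) (ha : f a = 0)
    (hx : a ≤ x) : 0 ≤ f x :=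
  ha ▸ monotoneOn_of_hasDerivAt_nonneg (convex_Ici a) hf
    (fun t ht ↦ hf' t (interior_subset ht)) self_mem_Ici hx hx

noncomputable def reverseForwardGap (ρ x : ℝ) : ℝ :=
  (1 + ρ) * log x - (x - 1) - ρ * (1 - x⁻¹)

lemma abs_reverse_sub_abs_forward {x : ℝ} (hx : 1 ≤ x) (ρ Q : ℝ) :
    |log x| * Q + |log x⁻¹| * (ρ * Q) - (|1 - x| * Q + |1 - x⁻¹| * (ρ * Q))
      = Q * reverseForwardGap ρ x := by
  have hlog : 0 ≤ log x := log_nonneg hx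
  have hinv : x⁻¹ ≤ 1 := inv_le_one_of_one_le₀ hx
  rw [log_inv, abs_neg, abs_of_nonneg hlog, abs_of_nonpos (by linarith),
    abs_of_nonneg (by linarith), reverseForwardGap]
  ring

lemma reverseForwardGap_one (ρ : ℝ) : reverseForwardGap ρ 1 = 0 := by
  simp [reverseForwardGap]

lemma hasDerivAt_reverseForwardGap (ρ : ℝ) {x : ℝ} (hx : 0 < x) :
    HasDerivAt (reverseForwardGap ρ) ((x - 1) * (ρ - x) / x ^ 2) x := by
  refine ((((hasDerivAt_log hx.ne').const_mul (1 + ρ)).sub ((hasDerivAt_id' x).sub_const 1)).sub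
    (((hasDerivAt_inv hx.ne').const_sub 1).const_mul ρ)).congr_deriv ?_
  field_simp
  ring

lemma reverseForwardGap_nonneg_of_le {ρ x y : ℝ} (hρ : 1 ≤ ρ) (hx : 1 ≤ x) (hxy : x ≤ y)
    (hy : 0 ≤ reverseForwardGap ρ y) : 0 ≤ reverseForwardGap ρ x := by
  rcases le_total x ρ with hxρ | hρx
  · have hmono : MonotoneOn (reverseForwardGap ρ) (Icc 1 ρ) :=
      monotoneOn_of_hasDerivAt_nonneg (convex_Icc 1 ρ)
        (fun t ht ↦ hasDerivAt_reverseForwardGap ρ (by linarith [ht.1])) fun t ht ↦ by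
          rw [interior_Icc] at ht
          exact div_nonneg (mul_nonneg (by linarith [ht.1]) (by linarith [ht.2])) (sq_nonneg t)
    simpa [reverseForwardGap_one] using hmono ⟨le_rfl, hρ⟩ ⟨hx, hxρ⟩ hx
  · have hanti : AntitoneOn (reverseForwardGap ρ) (Ici ρ) :=
      antitoneOn_of_hasDerivAt_nonpos (convex_Ici ρ)
        (fun t ht ↦ hasDerivAt_reverseForwardGap ρ (by linarith [mem_Ici.1 ht])) fun t ht ↦ by
          rw [interior_Ici] at ht
          exact div_nonpos_of_nonpos_of_nonneg
            (mul_nonpos_of_nonneg_of_nonpos (by linarith [mem_Ioi.1 ht])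
              (by linarith [mem_Ioi.1 ht])) (sq_nonneg t)
    exact hy.trans (hanti hρx (hρx.trans hxy) hxy)

noncomputable def logShift (t : ℝ) : ℝ := log (t + (exp 1 - 1))

lemma logShift_one : logShift 1 = 1 := by
  simp [logShift]

lemma one_le_logShift {t : ℝ} (ht : 1 ≤ t) : 1 ≤ logShift t := by
  rw [logShift, le_log_iff_exp_le (by linarith [exp_pos 1])]
  linarith

lemma exp_one_mul_logShift_le {t : ℝ} (ht : 1 ≤ t) : exp 1 * logShift t ≤ t + (exp 1 - 1) := by
  simpa [logShift, exp_log (by linarith [exp_pos 1] : 0 < t + (exp 1 - 1))] using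
    exp_one_mul_le_exp (x := logShift t)

lemma hasDerivAt_logShift {t : ℝ} (ht : 0 < t) :
    HasDerivAt logShift (t + (exp 1 - 1))⁻¹ t :=
  (((hasDerivAt_id' t).add_const (exp 1 - 1)).log
    (by linarith [add_one_le_exp 1])).congr_deriv (one_div _)

noncomputable def endpointGap (t : ℝ) : ℝ :=
  (1 + t) * (log t + log (logShift t)) + 1 + (logShift t)⁻¹ - t * logShift t - t

noncomputable def endpointGapDeriv (t : ℝ) : ℝ :=
  log t + log (logShift t) + (1 + t) * (t⁻¹ + ((t + (exp 1 - 1)) * logShift t)⁻¹)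
    - ((t + (exp 1 - 1)) * logShift t ^ 2)⁻¹ - logShift t - t / (t + (exp 1 - 1)) - 1

def endpointGapSecondDerivNum (c t L : ℝ) : ℝ :=
  (t - 1) * (t + c - 1) ^ 2 * L ^ 3 - t ^ 2 * L ^ 3 * (t + 2 * c - 2)
    + 2 * t ^ 2 * (t + c - 1) * L ^ 2 - (1 + t) * (L + 1) * t ^ 2 * L + (L + 2) * t ^ 2

lemma reverseForwardGap_endpoint {t : ℝ} (ht : 1 ≤ t) :
    reverseForwardGap t (t * logShift t) = endpointGap t := by
  have hL := one_le_logShift ht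
  rw [reverseForwardGap, endpointGap, log_mul (by positivity) (by positivity)]
  field_simp
  ring

lemma endpointGap_one : endpointGap 1 = 0 := by
  simp [endpointGap, logShift_one]

lemma endpointGapDeriv_one : endpointGapDeriv 1 = 0 := by
  simp only [endpointGapDeriv, logShift_one, log_one]
  ring

lemma hasDerivAt_endpointGap {t : ℝ} (ht : 1 ≤ t) :
    HasDerivAt endpointGap (endpointGapDeriv t) t := by
  have ht0 : 0 < t := by linarith
  have hL := one_le_logShift ht
  have hs : 0 < t + (exp 1 - 1) := by linarith [add_one_le_exp 1]
  have hℓ := hasDerivAt_logShift ht0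
  have hlog := (hasDerivAt_log ht0.ne').fun_add (hℓ.log (by positivity))
  have h := ((((hasDerivAt_id' t).const_add 1).fun_mul hlog).add_const 1).fun_add
    (hℓ.fun_inv (by positivity)) |>.fun_sub ((hasDerivAt_id' t).fun_mul hℓ)
    |>.fun_sub (hasDerivAt_id' t)
  refine h.congr_deriv ?_
  rw [endpointGapDeriv]
  field_simp
  ring

lemma hasDerivAt_endpointGapDeriv {t : ℝ} (ht : 1 ≤ t) :
    HasDerivAt endpointGapDeriv (endpointGapSecondDerivNum (exp 1) t (logShift t)
      / (t ^ 2 * (t + (exp 1 - 1)) ^ 2 * logShift t ^ 3)) t := by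
  have ht0 : 0 < t := by linarith
  have hL := one_le_logShift ht
  have hs : 0 < t + (exp 1 - 1) := by linarith [add_one_le_exp 1]
  have hℓ := hasDerivAt_logShift ht0
  have hσ : HasDerivAt (fun u ↦ u + (exp 1 - 1)) 1 t := (hasDerivAt_id' t).add_const _
  have hlog := (hasDerivAt_log ht0.ne').fun_add (hℓ.log (by positivity))
  have hσℓ := (hσ.fun_mul hℓ).fun_inv (by positivity)
  have hσℓ2 := (hσ.fun_mul (hℓ.fun_pow 2)).fun_inv (by positivity)
  have h := (hlog.fun_add (((hasDerivAt_id' t).const_add 1).fun_mul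
    ((hasDerivAt_inv ht0.ne').fun_add hσℓ))).fun_sub hσℓ2 |>.fun_sub hℓ
    |>.fun_sub ((hasDerivAt_id' t).fun_div hσ hs.ne') |>.sub_const 1
  refine h.congr_deriv ?_
  rw [endpointGapSecondDerivNum]
  field_simp
  ring

lemma endpointGapSecondDerivNum_nonneg {c t L : ℝ} (hc : 5 / 2 ≤ c) (hL : 1 ≤ L)
    (hcL : c * L ≤ t + c - 1) :
    0 ≤ endpointGapSecondDerivNum c t L := by
  obtain ⟨d, hd, rfl⟩ : ∃ d, 0 ≤ d ∧ c = 5 / 2 + d := ⟨c - 5 / 2, by linarith, by ring⟩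
  obtain ⟨n, hn, rfl⟩ : ∃ n, 0 ≤ n ∧ L = 1 + n := ⟨L - 1, by linarith, by ring⟩
  obtain ⟨b, hb, rfl⟩ : ∃ b, 0 ≤ b ∧ t = (5 / 2 + d) * n + b + 1 :=
    ⟨t - (5 / 2 + d) * n - 1, by linarith, by ring⟩
  lift d to NNReal using hd
  lift n to NNReal using hn
  lift b to NNReal using hb
  rw [endpointGapSecondDerivNum]
  -- every coefficient of the expanded polynomial in `d, n, b` is nonnegative
  ring_nf
  positivity

lemma endpointGapDeriv_nonneg {t : ℝ} (ht : 1 ≤ t) : 0 ≤ endpointGapDeriv t := by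
  refine nonneg_of_hasDerivAt_nonneg (fun u hu ↦ hasDerivAt_endpointGapDeriv hu)
    (fun u hu ↦ div_nonneg (endpointGapSecondDerivNum_nonneg ?_ (one_le_logShift hu) ?_) ?_)
    endpointGapDeriv_one ht
  · linarith [exp_one_gt_d9]
  · linarith [exp_one_mul_logShift_le hu]
  · have := one_le_logShift hu
    have : 0 < u + (exp 1 - 1) := by linarith [add_one_le_exp 1]
    positivity

lemma endpointGap_nonneg {t : ℝ} (ht : 1 ≤ t) : 0 ≤ endpointGap t :=
  nonneg_of_hasDerivAt_nonneg (fun _ hu ↦ hasDerivAt_endpointGap hu)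
    (fun _ hu ↦ endpointGapDeriv_nonneg hu) endpointGap_one ht

theorem reverse_dominates_forward_general (p q P Q ρ : ℝ)
    (hp : 0 < p) (hq : 0 < q) (hQ : 0 < Q)
    (hρ : 1 < ρ) (hPQ : P = ρ * Q)
    (r : ℝ) (hr : r = Real.log (p / q)) (hr0 : 0 < r)
    (hr1 : r ≤ Real.log ρ + Real.log (Real.log (ρ + (Real.exp 1 - 1)))) :
    |Real.log (p / q)| * Q + |Real.log (q / p)| * P
      ≥ |1 - p / q| * Q + |1 - q / p| * P := by
  have hx : 1 < p / q := (log_pos_iff (div_pos hp hq).le).1 (hr ▸ hr0)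
  have hL := one_le_logShift hρ.le
  have hxL : p / q ≤ ρ * logShift ρ := by
    rw [← log_le_log_iff (div_pos hp hq) (by positivity), log_mul (by positivity) (by positivity),
      ← hr]
    exact hr1
  have hgap : 0 ≤ reverseForwardGap ρ (p / q) :=
    reverseForwardGap_nonneg_of_le hρ.le hx.le hxL
      (reverseForwardGap_endpoint hρ.le ▸ endpointGap_nonneg hρ.le)
  have hdiff := abs_reverse_sub_abs_forward hx.le ρ Q
  rw [← inv_div p q, hPQ]
  linarith [mul_nonneg hQ.le hgap]

/-- Reverse derivative magnitude dominates forward derivative magnitude. -/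
theorem reverse_dominates_forward (p q P Q ρ : ℝ)
    (hp : 0 < p) (hq : 0 < q) (hP : 0 < P) (hQ : 0 < Q)
    (hρ : 1 < ρ) (hPQ : P = ρ * Q)
    (r : ℝ) (hr : r = Real.log (p / q)) (hr0 : 0 < r)
    (hr1 : r ≤ Real.log ρ + Real.log (Real.log (ρ + (Real.exp 1 - 1)))) :
    |Real.log (p / q)| * Q + |Real.log (q / p)| * P
      ≥ |1 - p / q| * Q + |1 - q / p| * P :=
  reverse_dominates_forward_general p q P Q ρ hp hq hQ hρ hPQ r hr hr0 hr1
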